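/- arXiv:1007.3515 — 2 statements merged into one kernel-verified Lean document; each statement's English description precedes it below -/
import Mathlib

section
/- The limits of the alternating fixpoint construction satisfy P_ω = Γ(N_ω) and N_ω = Γ'(P_ω), where the sequences stabilize after finitely many steps. -/
open Filter

/-! In a finite powerset the alternating sequences, being monotone resp. antitone, become constant
from some index `k` on; there `P_ω = P_(k+1) = Γ(N_k) = Γ(N_ω)` and symmetrically for `N_ω`. -/

theorem Monotone.eventually_iSup_eq {α : Type*} [CompleteLattice α] [WellFoundedGT α]
    {f : ℕ → α} (hf : Monotone f) : ∀ᶠ m in atTop, ⨆ i, f i = f m := by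
  obtain ⟨n, hn⟩ := WellFoundedGT.monotone_chain_condition ⟨f, hf⟩
  refine eventually_atTop.2 ⟨n, fun m hm => ?_⟩
  calc ⨆ i, f i = ⨆ i, f (i + m) := (hf.iSup_nat_add m).symm
    _ = ⨆ _ : ℕ, f m :=
      iSup_congr fun i => (hn _ (hm.trans (Nat.le_add_left m i))).symm.trans (hn m hm)
    _ = f m := ciSup_const

theorem Antitone.eventually_iInf_eq {α : Type*} [CompleteLattice α] [WellFoundedLT α]
    {f : ℕ → α} (hf : Antitone f) : ∀ᶠ m in atTop, ⨅ i, f i = f m :=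
  Monotone.eventually_iSup_eq (α := αᵒᵈ) hf

theorem monotone_antitone_of_alternating {α : Type*} [Preorder α] {Γ Γ' : α → α}
    (hΓ : Antitone Γ) (hΓ' : Antitone Γ') {P N : ℕ → α}
    (hP : ∀ n, P (n + 1) = Γ (N n)) (hN : ∀ n, N (n + 1) = Γ' (P n))
    (hP₀ : P 0 ≤ P 1) (hN₀ : N 1 ≤ N 0) : Monotone P ∧ Antitone N := by
  have step : ∀ n, P n ≤ P (n + 1) ∧ N (n + 1) ≤ N n := by
    intro n
    induction n with
    | zero => exact ⟨hP₀, hN₀⟩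
    | succ n ih =>
      constructor
      · rw [hP n, hP (n + 1)]; exact hΓ ih.2
      · rw [hN n, hN (n + 1)]; exact hΓ' ih.1
  exact ⟨monotone_nat_of_le_succ fun n => (step n).1, antitone_nat_of_succ_le fun n => (step n).2⟩

theorem alternating_limits_fixpoint_general {A : Type} [Finite A] (KA : Set A)
    (Γ Γ' : Set A → Set A)
    (hΓ : ∀ S S', S ⊆ S' → Γ S' ⊆ Γ S)
    (hΓ' : ∀ S S', S ⊆ S' → Γ' S' ⊆ Γ' S)
    (hΓ'KA : ∀ S, Γ' S ⊆ KA)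
    (Pseq Nseq : ℕ → Set A)
    (hP0 : Pseq 0 = ∅) (hN0 : Nseq 0 = KA)
    (hPs : ∀ n, Pseq (n + 1) = Γ (Nseq n))
    (hNs : ∀ n, Nseq (n + 1) = Γ' (Pseq n)) :
    (⋃ i, Pseq i) = Γ (⋂ i, Nseq i) ∧ (⋂ i, Nseq i) = Γ' (⋃ i, Pseq i) := by
  obtain ⟨hPmono, hNanti⟩ := monotone_antitone_of_alternating hΓ hΓ' hPs hNs
    (hP0 ▸ Set.empty_subset _) (hNs 0 ▸ hN0 ▸ hΓ'KA _)
  obtain ⟨k, hk⟩ := eventually_atTop.1 (hPmono.eventually_iSup_eq.and hNanti.eventually_iInf_eq)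
  have hPω (m : ℕ) (hm : k ≤ m) : (⋃ i, Pseq i) = Pseq m := (hk m hm).1
  have hNω (m : ℕ) (hm : k ≤ m) : (⋂ i, Nseq i) = Nseq m := (hk m hm).2
  constructor
  · rw [hPω (k + 1) k.le_succ, hPs k, hNω k le_rfl]
  · rw [hNω (k + 1) k.le_succ, hNs k, hPω k le_rfl]

/-- The limits of the alternating fixpoint construction satisfy
P_ω = Γ(N_ω) and N_ω = Γ'(P_ω). -/
theorem alternating_limits_fixpoint {A : Type} [Finite A] (KA : Set A)
    (Γ Γ' : Set A → Set A)
    (hΓ : ∀ S S', S ⊆ S' → Γ S' ⊆ Γ S)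
    (hΓ' : ∀ S S', S ⊆ S' → Γ' S' ⊆ Γ' S)
    (hΓKA : ∀ S, Γ S ⊆ KA) (hΓ'KA : ∀ S, Γ' S ⊆ KA)
    (Pseq Nseq : ℕ → Set A)
    (hP0 : Pseq 0 = ∅) (hN0 : Nseq 0 = KA)
    (hPs : ∀ n, Pseq (n + 1) = Γ (Nseq n))
    (hNs : ∀ n, Nseq (n + 1) = Γ' (Pseq n)) :
    (⋃ i, Pseq i) = Γ (⋂ i, Nseq i) ∧ (⋂ i, Nseq i) = Γ' (⋃ i, Pseq i) :=
  alternating_limits_fixpoint_general KA Γ Γ' hΓ hΓ' hΓ'KA Pseq Nseq hP0 hN0 hPs hNs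
end

section
/- The union of an arbitrary family of unfounded sets of K with respect to (T,F) is itself an unfounded set of K with respect to (T,F); hence the greatest unfounded set U_K(T,F) exists and is an unfounded set. -/
/-! Each condition of unfoundedness mentions `U` only through `U ∪ F`, positively, so the conditions
for an atom `H ∈ U` persist when `U` is enlarged. An atom of a union lies in some member, and its
conditions transfer from that member to the whole union. -/

/-- A ground MKNF rule: head atom, positive body atoms, negative body atoms. -/
structure MRule (Atom : Type) where
  head : Atom
  pos : Finset Atom
  neg : Finset Atom

/-- U ⊆ KA is an unfounded set of K w.r.t. (T,F): each H ∈ U satisfies (Ui):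
every rule with head H has (Uia) a positive body atom in U ∪ F, or (Uib) a
negative body atom in T, or (Uic) OB_{O,T} ⊨ ¬H; and (Uii): every minimal
consistent S ⊆ KA with OB_{O,S} ⊨ H contains an atom A ∈ U ∪ F whose removal
breaks the entailment. Here `entailsPos S H` stands for OB_{O,S} ⊨ H,
`entailsNeg T H` for OB_{O,T} ⊨ ¬H, and `consistent S` for consistency of
OB_{O,S}. -/
def IsUnfounded {Atom : Type} (P : Finset (MRule Atom)) (KA : Set Atom)
    (entailsPos : Set Atom → Atom → Prop)
    (entailsNeg : Set Atom → Atom → Prop)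
    (consistent : Set Atom → Prop)
    (T F U : Set Atom) : Prop :=
  U ⊆ KA ∧ ∀ H ∈ U,
    (∀ r ∈ P, r.head = H →
      ((∃ A ∈ r.pos, A ∈ U ∪ F) ∨ (∃ B ∈ r.neg, B ∈ T) ∨ entailsNeg T H)) ∧
    (∀ S ⊆ KA, entailsPos S H → (∀ S' ⊂ S, ¬ entailsPos S' H) →
      consistent S → ∃ A, ¬ entailsPos (S \ {A}) H ∧ A ∈ U ∪ F)

section

variable {Atom : Type} (P : Finset (MRule Atom)) (KA : Set Atom)
  (entailsPos : Set Atom → Atom → Prop) (entailsNeg : Set Atom → Atom → Prop)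
  (consistent : Set Atom → Prop) (T F : Set Atom)

/-- Conditions (Ui) and (Uii) for the atom `H` relative to the candidate set `U`; `IsUnfounded … U`
unfolds to `U ⊆ KA ∧ ∀ H ∈ U, UnfoundedAt … U H`. -/
def UnfoundedAt (U : Set Atom) (H : Atom) : Prop :=
  (∀ r ∈ P, r.head = H →
    ((∃ A ∈ r.pos, A ∈ U ∪ F) ∨ (∃ B ∈ r.neg, B ∈ T) ∨ entailsNeg T H)) ∧
  (∀ S ⊆ KA, entailsPos S H → (∀ S' ⊂ S, ¬ entailsPos S' H) →
    consistent S → ∃ A, ¬ entailsPos (S \ {A}) H ∧ A ∈ U ∪ F)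

variable {P KA entailsPos entailsNeg consistent T F}

theorem UnfoundedAt.mono {U V : Set Atom} {H : Atom} (hUV : U ⊆ V)
    (hU : UnfoundedAt P KA entailsPos entailsNeg consistent T F U H) :
    UnfoundedAt P KA entailsPos entailsNeg consistent T F V H := by
  have hUF : U ∪ F ⊆ V ∪ F := Set.union_subset_union_left F hUV
  obtain ⟨hUi, hUii⟩ := hU
  refine ⟨fun r hr hhead => ?_, fun S hS hent hmin hcons => ?_⟩
  · exact (hUi r hr hhead).imp_left fun ⟨A, hA, hAU⟩ => ⟨A, hA, hUF hAU⟩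
  · exact (hUii S hS hent hmin hcons).imp fun _ => And.imp_right (hUF ·)

theorem isUnfounded_sUnion {𝒰 : Set (Set Atom)}
    (h𝒰 : ∀ U ∈ 𝒰, IsUnfounded P KA entailsPos entailsNeg consistent T F U) :
    IsUnfounded P KA entailsPos entailsNeg consistent T F (⋃₀ 𝒰) := by
  refine ⟨Set.sUnion_subset fun U hU => (h𝒰 U hU).1, ?_⟩
  rintro H ⟨U, hU, hHU⟩
  exact UnfoundedAt.mono (Set.subset_sUnion_of_mem hU) ((h𝒰 U hU).2 H hHU)

theorem isUnfounded_iUnion {I : Sort*} {f : I → Set Atom}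
    (hf : ∀ i, IsUnfounded P KA entailsPos entailsNeg consistent T F (f i)) :
    IsUnfounded P KA entailsPos entailsNeg consistent T F (⋃ i, f i) := by
  rw [← Set.sUnion_range]
  exact isUnfounded_sUnion (Set.forall_mem_range.2 hf)

end

/-- The union of an arbitrary family of unfounded sets w.r.t. (T,F) is itself
unfounded w.r.t. (T,F); hence the union of all unfounded sets — the greatest
unfounded set U_K(T,F) — is an unfounded set containing every unfounded set. -/
theorem unfounded_union {Atom : Type} (P : Finset (MRule Atom)) (KA : Set Atom)
    (entailsPos : Set Atom → Atom → Prop)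
    (entailsNeg : Set Atom → Atom → Prop)
    (consistent : Set Atom → Prop)
    (T F : Set Atom) :
    (∀ (I : Type) (f : I → Set Atom),
      (∀ i, IsUnfounded P KA entailsPos entailsNeg consistent T F (f i)) →
      IsUnfounded P KA entailsPos entailsNeg consistent T F (⋃ i, f i)) ∧
    IsUnfounded P KA entailsPos entailsNeg consistent T F
      (⋃₀ {U | IsUnfounded P KA entailsPos entailsNeg consistent T F U}) ∧
    (∀ U, IsUnfounded P KA entailsPos entailsNeg consistent T F U →
      U ⊆ ⋃₀ {U | IsUnfounded P KA entailsPos entailsNeg consistent T F U}) :=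
  ⟨fun _ _ => isUnfounded_iUnion, isUnfounded_sUnion fun _ => id,
    fun _ hU => Set.subset_sUnion_of_mem hU⟩
end
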